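/- Let D be a finite digraph and let G be the 2-edge-colored graph obtained by replacing every vertex v of D by two vertices v', v'' joined by a red edge, and adding, for every arc uv of D, a blue edge u''v'. Then G is bipartite, and for every T ⊆ V(D), the digraph D − T has no directed cycle if and only if G − T' is PC acyclic of type 5, where T' = {v' : v ∈ T}. -/

import Mathlib

open SimpleGraph

variable {V : Type*} {c : ℕ}

/-- The list of colors of the edges of a walk, in order. -/
def colorList (G : SimpleGraph V) (col : V → V → Fin c) {u v : V} (w : G.Walk u v) :
    List (Fin c) :=
  w.darts.map fun d => col d.toProd.1 d.toProd.2

/-- A walk is properly colored (as an open walk): consecutive edges have different colors. -/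
def IsPCOpen (G : SimpleGraph V) (col : V → V → Fin c) {u v : V} (w : G.Walk u v) : Prop :=
  (colorList G col w).Chain' (· ≠ ·)

/-- A closed walk is properly colored: consecutive edges have different colors,
including the last versus the first edge. -/
def IsPCClosed (G : SimpleGraph V) (col : V → V → Fin c) {u : V} (w : G.Walk u u) : Prop :=
  (colorList G col w ++ (colorList G col w).take 1).Chain' (· ≠ ·)

/-- `G` (with coloring `col`) has a properly colored cycle. -/
def HasPCCycle (G : SimpleGraph V) (col : V → V → Fin c) : Prop :=
  ∃ (u : V) (w : G.Walk u u), w.IsCycle ∧ IsPCClosed G col w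

/-- `G` (with coloring `col`) has a properly colored closed trail. -/
def HasPCClosedTrail (G : SimpleGraph V) (col : V → V → Fin c) : Prop :=
  ∃ (u : V) (w : G.Walk u u), w.IsCircuit ∧ IsPCClosed G col w

/-- `G` (with coloring `col`) has a properly colored closed walk. -/
def HasPCClosedWalk (G : SimpleGraph V) (col : V → V → Fin c) : Prop :=
  ∃ (u : V) (w : G.Walk u u), 0 < w.length ∧ IsPCClosed G col w

/-- A vertex all of whose incident edges have the same color. -/
def MonoVertex (G : SimpleGraph V) (col : V → V → Fin c) (z : V) : Prop :=
  ∀ v w, G.Adj z v → G.Adj z w → col z v = col z w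

/-- An ordering (given by an injective ranking `r`) is of type 1 if every vertex sends
edges of only one color into each connected component of the subgraph induced by the
later vertices. -/
def Ordering1 (G : SimpleGraph V) (col : V → V → Fin c) (r : V → ℕ) : Prop :=
  ∀ (u v w : V) (hv : G.Adj u v) (hw : G.Adj u w) (hrv : r u < r v) (hrw : r u < r w),
    (G.induce {x | r u < r x}).Reachable ⟨v, hrv⟩ ⟨w, hrw⟩ → col u v = col u w

/-- Type 2: all edges from a vertex to later vertices which are not bridges in the
subgraph induced by the vertex together with the later vertices have the same color. -/
def Ordering2 (G : SimpleGraph V) (col : V → V → Fin c) (r : V → ℕ) : Prop :=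
  ∀ (u v w : V) (hv : G.Adj u v) (hw : G.Adj u w) (hrv : r u < r v) (hrw : r u < r w),
    ¬ (G.induce {x | r u ≤ r x}).IsBridge s(⟨u, le_refl (r u)⟩, ⟨v, hrv.le⟩) →
    ¬ (G.induce {x | r u ≤ r x}).IsBridge s(⟨u, le_refl (r u)⟩, ⟨w, hrw.le⟩) →
    col u v = col u w

/-- Type 3: all edges from a vertex to later vertices have the same color. -/
def Ordering3 (G : SimpleGraph V) (col : V → V → Fin c) (r : V → ℕ) : Prop :=
  ∀ u v w : V, G.Adj u v → G.Adj u w → r u < r v → r u < r w → col u v = col u w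

/-- Type 4: all edges to later vertices have the same color and all edges to earlier
vertices have the same color. -/
def Ordering4 (G : SimpleGraph V) (col : V → V → Fin c) (r : V → ℕ) : Prop :=
  Ordering3 G col r ∧
    ∀ u v w : V, G.Adj u v → G.Adj u w → r v < r u → r w < r u → col u v = col u w

/-- Type 5: type 4, and additionally the color towards earlier vertices differs from the
color towards later vertices. -/
def Ordering5 (G : SimpleGraph V) (col : V → V → Fin c) (r : V → ℕ) : Prop :=
  Ordering4 G col r ∧
    ∀ u v w : V, G.Adj u v → G.Adj u w → r v < r u → r u < r w → col u v ≠ col u w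

def PCAcyclic1 (G : SimpleGraph V) (col : V → V → Fin c) : Prop :=
  ∃ r : V → ℕ, Function.Injective r ∧ Ordering1 G col r

def PCAcyclic2 (G : SimpleGraph V) (col : V → V → Fin c) : Prop :=
  ∃ r : V → ℕ, Function.Injective r ∧ Ordering2 G col r

def PCAcyclic3 (G : SimpleGraph V) (col : V → V → Fin c) : Prop :=
  ∃ r : V → ℕ, Function.Injective r ∧ Ordering3 G col r

def PCAcyclic4 (G : SimpleGraph V) (col : V → V → Fin c) : Prop :=
  ∃ r : V → ℕ, Function.Injective r ∧ Ordering4 G col r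

def PCAcyclic5 (G : SimpleGraph V) (col : V → V → Fin c) : Prop :=
  ∃ r : V → ℕ, Function.Injective r ∧ Ordering5 G col r

/-- The number of `C`-monochromatic vertices of a closed walk `C`: vertices whose two
incident edges on `C` (cyclically) have the same color. -/
def monoCount (G : SimpleGraph V) (col : V → V → Fin c) {u : V} (w : G.Walk u u) : ℕ :=
  ((colorList G col w ++ (colorList G col w).take 1).zip
      (colorList G col w ++ (colorList G col w).take 1).tail).countP
    fun p => decide (p.1 = p.2)

/-- The number of vertices of a closed walk `C` that are not `C`-monochromatic. -/
def nonMonoCount (G : SimpleGraph V) (col : V → V → Fin c) {u : V} (w : G.Walk u u) : ℕ :=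
  ((colorList G col w ++ (colorList G col w).take 1).zip
      (colorList G col w ++ (colorList G col w).take 1).tail).countP
    fun p => decide (p.1 ≠ p.2)

/-- The 2-edge-colored graph obtained from a digraph `D` by the standard transformation:
every vertex `v` becomes `v' = Sum.inl v` and `v'' = Sum.inr v` joined by a red edge,
and every arc `uv` of `D` becomes a blue edge `u''v'`. -/
def DTGraph {U : Type*} (D : U → U → Prop) : SimpleGraph (U ⊕ U) :=
  SimpleGraph.fromRel fun a b =>
    (∃ v : U, a = Sum.inl v ∧ b = Sum.inr v) ∨
    (∃ u v : U, D u v ∧ a = Sum.inr u ∧ b = Sum.inl v)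

/-- Red is color `0` (edges `v'v''`), blue is color `1` (edges `u''v'` for arcs `uv`). -/
def col19 {U : Type*} [DecidableEq U] : (U ⊕ U) → (U ⊕ U) → Fin 2 := fun a b =>
  match a, b with
  | Sum.inl x, Sum.inr y => if x = y then 0 else 1
  | Sum.inr x, Sum.inl y => if x = y then 0 else 1
  | _, _ => 0

/-!
If `D − T` is acyclic, let `g v` be the number of ancestors of `v` in `D − T` and place `v'`
at height `2 g v + 1`, `v''` at `2 g v + 2`, and `v''` at the bottom when `v ∈ T`. Every red
edge `v'v''` and every blue edge `u''v'` then goes upwards, so each `v'` sees blue below and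
red above and each `v''` the reverse: breaking ties gives a type 5 ordering.

Conversely, in a type 4 ordering a vertex whose two incident edges have different colors lies
strictly between their other ends. For an arc `uv` of `D − T` the path `u' u'' v' v''` is
properly colored, so its ranks are monotone. Hence whether `v'` precedes `v''` is constant
along a directed cycle, while the rank of `v''` moves strictly in one direction: impossible.
-/

open Function

namespace Relation

variable {α : Type*} {R : α → α → Prop}

theorem not_transGen_self_of_lt {β : Type*} [Preorder β] (φ : α → β)
    (h : ∀ a b, R a b → φ a < φ b) (a : α) : ¬ TransGen R a a := fun hR =>
  lt_irrefl _ (by simpa only [transGen_eq_self] using TransGen.lift φ h _ _ hR)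

theorem exists_nat_lt_of_not_transGen_self [Finite α] (h : ∀ a, ¬ TransGen R a a) :
    ∃ g : α → ℕ, ∀ a b, R a b → g a < g b := by
  refine ⟨fun b => {x | TransGen R x b}.ncard, fun a b hab => Set.ncard_lt_ncard ?_⟩
  refine Set.ssubset_iff_of_subset (fun x hx => TransGen.tail hx hab) |>.2 ⟨a, ?_, h a⟩
  exact TransGen.single hab

end Relation

section Orderings

variable {V : Type*} {c : ℕ} {G : SimpleGraph V} {col : V → V → Fin c}

theorem Ordering5.of_lt_imp_lt {f r : V → ℕ} (hf : Ordering5 G col f)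
    (h : ∀ u v, G.Adj u v → r u < r v → f u < f v) : Ordering5 G col r := by
  obtain ⟨⟨h3, h4⟩, h5⟩ := hf
  refine ⟨⟨fun u v w hv hw hv' hw' => h3 u v w hv hw (h _ _ hv hv') (h _ _ hw hw'),
    fun u v w hv hw hv' hw' => h4 u v w hv hw (h _ _ hv.symm hv') (h _ _ hw.symm hw')⟩,
    fun u v w hv hw hv' hw' => h5 u v w hv hw (h _ _ hv.symm hv') (h _ _ hw hw')⟩

theorem pcAcyclic5_of_ordering5 [Finite V] {f : V → ℕ} (hf : ∀ u v, G.Adj u v → f u ≠ f v)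
    (h : Ordering5 G col f) : PCAcyclic5 G col := by
  obtain ⟨n, ⟨e⟩⟩ := Finite.exists_equiv_fin V
  have he : ∀ v, (e v : ℕ) < n + 1 := fun v => (e v).isLt.trans n.lt_succ_self
  have hdiv : ∀ v, ((n + 1) * f v + e v) / (n + 1) = f v := fun v => by
    rw [Nat.mul_add_div n.succ_pos, Nat.div_eq_of_lt (he v), add_zero]
  have hmod : ∀ v, ((n + 1) * f v + e v) % (n + 1) = e v := fun v => by
    rw [Nat.mul_add_mod, Nat.mod_eq_of_lt (he v)]
  refine ⟨fun v => (n + 1) * f v + e v, fun u v huv => e.injective (Fin.ext ?_), ?_⟩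
  · simpa only [hmod] using congrArg (· % (n + 1)) huv
  · refine h.of_lt_imp_lt fun u v huv hlt => (hf u v huv).lt_of_le ?_
    rw [← hdiv u, ← hdiv v]
    exact Nat.div_le_div_right hlt.le

theorem pcAcyclic5_of_orientation [Finite V] (O : V → V → Prop) (f : V → ℕ) (σ τ : V → Fin c)
    (hστ : ∀ v, σ v ≠ τ v) (hO : ∀ u v, G.Adj u v → O u v ∨ O v u)
    (hf : ∀ u v, O u v → f u < f v) (hcol : ∀ u v, O u v → col u v = σ u ∧ col v u = τ v) :
    PCAcyclic5 G col := by
  have hup : ∀ u v, G.Adj u v → f u < f v → col u v = σ u ∧ col v u = τ v := by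
    intro u v huv hlt
    refine (hO u v huv).elim (hcol u v) fun hvu => ?_
    exact absurd (hf v u hvu) hlt.not_gt
  refine pcAcyclic5_of_ordering5 (f := f) ?_ ⟨⟨?_, ?_⟩, ?_⟩
  · intro u v huv
    rcases hO u v huv with h | h
    exacts [(hf u v h).ne, (hf v u h).ne']
  · intro u v w hv hw hv' hw'
    rw [(hup u v hv hv').1, (hup u w hw hw').1]
  · intro u v w hv hw hv' hw'
    rw [(hup v u hv.symm hv').2, (hup w u hw.symm hw').2]
  · intro u v w hv hw hv' hw'
    rw [(hup v u hv.symm hv').2, (hup u w hw hw').1]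
    exact (hστ u).symm

theorem Ordering4.lt_iff_lt_of_col_ne {r : V → ℕ} (h : Ordering4 G col r) (hr : Injective r)
    {x y z : V} (hy : G.Adj x y) (hz : G.Adj x z) (hc : col x y ≠ col x z) :
    r y < r x ↔ r x < r z := by
  have hy' := hr.ne hy.ne
  have hz' := hr.ne hz.ne
  constructor
  · intro hyx
    by_contra hxz
    exact hc (h.2 x y z hy hz hyx (lt_of_le_of_ne (not_lt.1 hxz) hz'.symm))
  · intro hxz
    by_contra hyx
    exact hc (h.1 x y z hy hz (lt_of_le_of_ne (not_lt.1 hyx) hy') hxz)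

end Orderings

section DTGraph

variable {U : Type*} {D : U → U → Prop}

def dtOrient (D : U → U → Prop) (a b : U ⊕ U) : Prop :=
  (∃ v : U, a = Sum.inl v ∧ b = Sum.inr v) ∨ (∃ u v : U, D u v ∧ a = Sum.inr u ∧ b = Sum.inl v)

theorem dtGraph_adj {a b : U ⊕ U} :
    (DTGraph D).Adj a b ↔ a ≠ b ∧ (dtOrient D a b ∨ dtOrient D b a) :=
  SimpleGraph.fromRel_adj _ a b

theorem dtGraph_adj_inl_inr (v : U) : (DTGraph D).Adj (Sum.inl v) (Sum.inr v) :=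
  dtGraph_adj.2 ⟨Sum.inl_ne_inr, Or.inl (Or.inl ⟨v, rfl, rfl⟩)⟩

theorem dtGraph_adj_inr_inl {u v : U} (h : D u v) : (DTGraph D).Adj (Sum.inr u) (Sum.inl v) :=
  dtGraph_adj.2 ⟨Sum.inr_ne_inl, Or.inl (Or.inr ⟨u, v, h, rfl, rfl⟩)⟩

theorem dtGraph_le_completeBipartiteGraph (D : U → U → Prop) :
    DTGraph D ≤ completeBipartiteGraph U U := by
  intro a b h
  obtain ⟨-, (⟨v, rfl, rfl⟩ | ⟨u, v, -, rfl, rfl⟩) | (⟨v, rfl, rfl⟩ | ⟨u, v, -, rfl, rfl⟩)⟩ :=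
    dtGraph_adj.1 h
  all_goals simp

theorem dtGraph_colorable_two (D : U → U → Prop) : (DTGraph D).Colorable 2 := by
  simpa using (CompleteBipartiteGraph.bicoloring U U).colorable.mono_left
    (dtGraph_le_completeBipartiteGraph D)

theorem inr_notMem_image_inl (T : Set U) (v : U) : (Sum.inr v : U ⊕ U) ∉ Sum.inl '' T := by
  simp

theorem inl_notMem_image_inl {T : Set U} {v : U} (h : v ∉ T) :
    (Sum.inl v : U ⊕ U) ∉ Sum.inl '' T := by
  simpa using h

open Classical in
noncomputable def dtRank (T : Set U) (g : U → ℕ) : U ⊕ U → ℕ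
  | Sum.inl v => 2 * g v + 1
  | Sum.inr v => if v ∈ T then 0 else 2 * g v + 2

theorem dtRank_lt_of_dtOrient {T : Set U} {g : U → ℕ}
    (hg : ∀ u v, D u v ∧ u ∉ T ∧ v ∉ T → g u < g v) {a b : U ⊕ U}
    (ha : a ∉ Sum.inl '' T) (hb : b ∉ Sum.inl '' T) (h : dtOrient D a b) :
    dtRank T g a < dtRank T g b := by
  obtain ⟨v, rfl, rfl⟩ | ⟨u, v, huv, rfl, rfl⟩ := h
  · have hv : v ∉ T := by simpa using ha
    simp [dtRank, hv]
  · have hv : v ∉ T := by simpa using hb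
    by_cases hu : u ∈ T
    · simp [dtRank, hu]
    · have := hg u v ⟨huv, hu, hv⟩
      simp only [dtRank, hu, if_false]
      omega

variable [DecidableEq U]

theorem col19_of_dtOrient (hD : ∀ v, ¬ D v v) {a b : U ⊕ U} (h : dtOrient D a b) :
    col19 a b = Sum.elim (fun _ => 0) (fun _ => 1) a ∧
      col19 b a = Sum.elim (fun _ => 1) (fun _ => 0) b := by
  obtain ⟨v, rfl, rfl⟩ | ⟨u, v, huv, rfl, rfl⟩ := h
  · simp [col19]
  · have : u ≠ v := fun h => hD v (h ▸ huv)
    simp [col19, this, Ne.symm this]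

theorem pcAcyclic5_dtGraph_of_acyclic [Finite U] (hD : ∀ v, ¬ D v v) {T : Set U}
    (h : ∀ v : U, ¬ Relation.TransGen (fun a b => D a b ∧ a ∉ T ∧ b ∉ T) v v) :
    PCAcyclic5 ((DTGraph D).induce {a | a ∉ Sum.inl '' T}) (fun a b => col19 a.1 b.1) := by
  obtain ⟨g, hg⟩ := Relation.exists_nat_lt_of_not_transGen_self h
  refine pcAcyclic5_of_orientation (fun a b => dtOrient D a.1 b.1) (fun a => dtRank T g a.1)
    (fun a => Sum.elim (fun _ => 0) (fun _ => 1) a.1)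
    (fun a => Sum.elim (fun _ => 1) (fun _ => 0) a.1) ?_
    (fun a b hab => (dtGraph_adj.1 hab).2)
    (fun a b hab => dtRank_lt_of_dtOrient hg a.2 b.2 hab)
    (fun a b hab => col19_of_dtOrient hD hab)
  rintro ⟨a | a, -⟩ <;> simp

theorem exists_potential_of_ordering4_dtGraph (hD : ∀ v, ¬ D v v) {T : Set U}
    {r : {a : U ⊕ U | a ∉ Sum.inl '' T} → ℕ} (hr : Injective r)
    (h : Ordering4 ((DTGraph D).induce {a | a ∉ Sum.inl '' T}) (fun a b => col19 a.1 b.1) r) :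
    ∃ φ : U → ℤ, ∀ a b, D a b ∧ a ∉ T ∧ b ∉ T → φ a < φ b := by
  classical
  let v'' (v : U) : {a : U ⊕ U | a ∉ Sum.inl '' T} := ⟨Sum.inr v, inr_notMem_image_inl T v⟩
  let v' {v : U} (hv : v ∉ T) : {a : U ⊕ U | a ∉ Sum.inl '' T} :=
    ⟨Sum.inl v, inl_notMem_image_inl hv⟩
  refine ⟨fun v => if hv : v ∈ T then 0
    else if r (v' hv) < r (v'' v) then (r (v'' v) : ℤ) else -(r (v'' v) : ℤ), ?_⟩
  rintro a b ⟨hab, ha, hb⟩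
  have hne : a ≠ b := fun h => hD b (h ▸ hab)
  have red (v : U) (hv : v ∉ T) :
      ((DTGraph D).induce {a | a ∉ Sum.inl '' T}).Adj (v' hv) (v'' v) :=
    dtGraph_adj_inl_inr v
  have blue : ((DTGraph D).induce {a | a ∉ Sum.inl '' T}).Adj (v'' a) (v' hb) :=
    dtGraph_adj_inr_inl hab
  have at_a := h.lt_iff_lt_of_col_ne hr (red a ha).symm blue (by simp [col19, v', v'', hne])
  have at_b := h.lt_iff_lt_of_col_ne hr blue.symm (red b hb) (by simp [col19, v', v'', Ne.symm hne])
  have ne_a := hr.ne (red a ha).ne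
  have ne_ab := hr.ne blue.ne
  have ne_b := hr.ne (red b hb).ne
  simp only [dif_neg ha, dif_neg hb]
  split_ifs <;> omega

end DTGraph

/-- The graph `DTGraph D` is bipartite, and for every `T ⊆ V(D)`,
the digraph `D − T` has no directed cycle if and only if `DTGraph D − T'` is PC acyclic
of type 5, where `T' = {v' : v ∈ T}`. -/
theorem feedback_vertex_set_reduction {U : Type*} [Fintype U] [DecidableEq U]
    (D : U → U → Prop) (hD : ∀ v : U, ¬ D v v) :
    (DTGraph D).Colorable 2 ∧
      ∀ T : Set U,
        ((∀ v : U, ¬ Relation.TransGen (fun a b => D a b ∧ a ∉ T ∧ b ∉ T) v v) ↔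
          PCAcyclic5 ((DTGraph D).induce {a | a ∉ Sum.inl '' T})
            (fun a b => col19 a.1 b.1)) := by
  refine ⟨dtGraph_colorable_two D, fun T => ⟨pcAcyclic5_dtGraph_of_acyclic hD, ?_⟩⟩
  rintro ⟨r, hr, h4, -⟩
  obtain ⟨φ, hφ⟩ := exists_potential_of_ordering4_dtGraph hD hr h4
  exact Relation.not_transGen_self_of_lt φ hφ
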